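/- Let s be a square root on an MV-algebra M. For all x,y ∈ M, s(x)⊙s(y) ≤ x ∨ y, and x ∧ x' ≤ s(0) for all x ∈ M. -/
import Mathlib


class MVAlg (M : Type*) where
  add : M → M → M
  compl : M → M
  zero : M
  one : M
  add_comm : ∀ x y, add x y = add y x
  add_assoc : ∀ x y z, add (add x y) z = add x (add y z)
  add_zero : ∀ x, add x zero = x
  compl_compl : ∀ x, compl (compl x) = x
  add_one : ∀ x, add x one = one
  chang : ∀ x y, add x (compl (add x (compl y))) = add y (compl (add y (compl x)))
  compl_zero : compl zero = one

namespace MVAlg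

variable {M : Type*} [MVAlg M]

/-- x ⊙ y := (x' ⊕ y')' -/
def odot (x y : M) : M := compl (add (compl x) (compl y))

/-- x ≤ y iff x' ⊕ y = 1 -/
def le (x y : M) : Prop := add (compl x) y = one

/-- x ∧ y := x ⊙ (x' ⊕ y) -/
def inf (x y : M) : M := odot x (add (compl x) y)

/-- x ∨ y := (x ⊙ y') ⊕ y -/
def sup (x y : M) : M := add (odot x (compl y)) y

/-- x ⊖ y := x ⊙ y' -/
def sub (x y : M) : M := odot x (compl y)

/-- A square root on an MV-algebra. -/
def IsSquareRoot (s : M → M) : Prop :=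
  (∀ x : M, odot (s x) (s x) = x) ∧ ∀ x y : M, le (odot y y) x → le y (s x)

theorem one_add' (x : M) : add one x = one := by rw [add_comm, add_one]

theorem zero_add' (x : M) : add zero x = x := by rw [add_comm, add_zero]

theorem compl_one' : (compl one : M) = zero := by rw [← compl_zero, compl_compl]

theorem add_self_compl (x : M) : add x (compl x) = one := by
  have h := chang x (one : M)
  rwa [compl_one', add_zero, one_add'] at h

theorem compl_add_self (x : M) : add (compl x) x = one := by
  rw [add_comm, add_self_compl]

theorem le_add_right (x z : M) : le x (add x z) := by
  unfold le
  rw [← add_assoc, compl_add_self, one_add']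

theorem le_add_left (x z : M) : le x (add z x) := by
  rw [add_comm]; exact le_add_right x z

theorem sup_eq (x y : M) : sup x y = add x (compl (add x (compl y))) := by
  unfold sup odot
  rw [compl_compl, add_comm (compl x) y, add_comm _ y, chang y x]

theorem le_sup_left (x y : M) : le x (sup x y) := by
  rw [sup_eq]; exact le_add_right x _

theorem le_sup_right (x y : M) : le y (sup x y) := by
  unfold sup; exact le_add_left y _

theorem le_iff_add {a b : M} (h : le a b) : add a (compl (add a (compl b))) = b := by
  rw [chang a b, add_comm b (compl a)]
  unfold le at h
  rw [h, compl_one', add_zero]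

theorem add_mono {a b : M} (h : le a b) (c : M) : le (add c a) (add c b) := by
  obtain ⟨d, hd⟩ : ∃ d, add a d = b := ⟨_, le_iff_add h⟩
  unfold le
  rw [← hd, ← add_assoc c a d, ← add_assoc, compl_add_self, one_add']

theorem le_trans' {a b c : M} (h1 : le a b) (h2 : le b c) : le a c := by
  obtain ⟨d, hd⟩ : ∃ d, add a d = b := ⟨_, le_iff_add h1⟩
  obtain ⟨e, he⟩ : ∃ e, add b e = c := ⟨_, le_iff_add h2⟩
  unfold le
  rw [← he, ← hd, add_assoc a d e, ← add_assoc, compl_add_self, one_add']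

theorem le_compl {a b : M} (h : le a b) : le (compl b) (compl a) := by
  unfold le at *
  rwa [compl_compl, add_comm]

theorem odot_comm (x y : M) : odot x y = odot y x := by
  unfold odot; rw [add_comm]

theorem odot_mono {a b : M} (h : le a b) (c : M) : le (odot c a) (odot c b) := by
  exact le_compl (add_mono (le_compl h) (compl c))

theorem odot_mono2 {a b c d : M} (h1 : le a b) (h2 : le c d) :
    le (odot a c) (odot b d) := by
  refine le_trans' (odot_mono h2 a) ?_
  rw [odot_comm a d, odot_comm b d]
  exact odot_mono h1 d

theorem inf_le_left (x y : M) : le (inf x y) x := by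
  unfold le inf odot
  rw [compl_compl, add_comm (compl x) _, add_assoc, compl_add_self, add_one]

theorem inf_le_right (x y : M) : le (inf x y) y := by
  unfold le inf odot
  rw [compl_compl, add_assoc]
  have h : add (compl (add (compl x) y)) y = sup x y := by
    unfold sup odot; rw [compl_compl]
  rw [h, sup_eq, ← add_assoc, compl_add_self, one_add']

theorem odot_compl_self (x : M) : odot x (compl x) = zero := by
  unfold odot
  rw [compl_compl, compl_add_self, compl_one']

end MVAlg

theorem square_root_odot_le_sup {M : Type*} [MVAlg M] (s : M → M)
    (hs : MVAlg.IsSquareRoot s) :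
    (∀ x y : M, MVAlg.le (MVAlg.odot (s x) (s y)) (MVAlg.sup x y)) ∧
    (∀ x : M, MVAlg.le (MVAlg.inf x (MVAlg.compl x)) (s MVAlg.zero)) := by
  open MVAlg in
  constructor
  · intro x y
    have hx : le (s x) (s (sup x y)) := by
      apply hs.2
      rw [hs.1]
      exact le_sup_left x y
    have hy : le (s y) (s (sup x y)) := by
      apply hs.2
      rw [hs.1]
      exact le_sup_right x y
    have h := odot_mono2 hx hy
    rwa [hs.1] at h
  · intro x
    apply hs.2
    have h := odot_mono2 (inf_le_left x (compl x)) (inf_le_right x (compl x))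
    rw [odot_compl_self] at h
    exact h
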